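/- Let g be a Lie bialgebra and V a Lie bialgebra with bracket {·,·} and cobracket δ_V, equipped with a left V-module action ⊳ on g, a right g-module action ⊲ on V, and maps f : V×V → g, Δ_E, Δ_V all trivial except ⊳, ⊲, {·,·}, δ_V. Then the double cross sum data (⊲, ⊳, {·,·}, δ_V) yields a Lie bialgebra structure on g ⊕ V with bracket [a+x, b+y] = [a,b] + x⊳b − y⊳a + x⊲b − y⊲a + {x,y} and cobracket δ(a+x) = δ_g(a) + δ_V(x) if and only if: (V,⊲) is a right g-module, (g,⊳) is a left V-module, the matched-pair conditions (LE3) x⊳[a,b] = [x⊳a,b] + [a,x⊳b] + (x⊲a)⊳b − (x⊲b)⊳a and (LE4) {x,y}⊲a = {x, y⊲a} + {x⊲a, y} + x⊲(y⊳a) − y⊲(x⊳a) hold, δ_V(x⊲a) = (I⊗R_⊲(a) + R_⊲(a)⊗I)δ_V(x), {x,y}⊳a = x⊳(y⊳a) − y⊳(x⊳a), δ_g(x⊳a) = (L_⊳(x)⊗I + I⊗L_⊳(x))δ_g(a), and (R_⊳(a)⊗I)δ_V(x) + (I⊗L_⊲(x))δ_g(x) = 0, for all a, b ∈ g and x, y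 ∈ V. -/

import Mathlib

open TensorProduct LinearMap

noncomputable section

/-- The flip `A ⊗ B → B ⊗ A`. -/
def flipT (k A B : Type*) [Field k] [AddCommGroup A] [Module k A]
    [AddCommGroup B] [Module k B] : A ⊗[k] B →ₗ[k] B ⊗[k] A :=
  (TensorProduct.comm k A B).toLinearMap

/-- Swap of the first two tensor factors `A ⊗ (B ⊗ C) → B ⊗ (A ⊗ C)`. -/
def swap12 (k A B C : Type*) [Field k] [AddCommGroup A] [Module k A]
    [AddCommGroup B] [Module k B] [AddCommGroup C] [Module k C] :
    A ⊗[k] (B ⊗[k] C) →ₗ[k] B ⊗[k] (A ⊗[k] C) :=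
  (TensorProduct.assoc k B A C).toLinearMap ∘ₗ
    rTensor C (flipT k A B) ∘ₗ (TensorProduct.assoc k A B C).symm.toLinearMap

/-- Associator as a linear map. -/
def asr (k A B C : Type*) [Field k] [AddCommGroup A] [Module k A]
    [AddCommGroup B] [Module k B] [AddCommGroup C] [Module k C] :
    (A ⊗[k] B) ⊗[k] C →ₗ[k] A ⊗[k] (B ⊗[k] C) :=
  (TensorProduct.assoc k A B C).toLinearMap

/-- `δ : M → M ⊗ M` is a Lie coalgebra structure: anti-cocommutativity and co-Jacobi. -/
def IsLieCoalgebra {k M : Type*} [Field k] [AddCommGroup M] [Module k M]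
    (δ : M →ₗ[k] M ⊗[k] M) : Prop :=
  (∀ m, flipT k M M (δ m) = - δ m) ∧
  (∀ m, lTensor M δ (δ m) - swap12 k M M M (lTensor M δ (δ m)) =
      asr k M M M (rTensor M δ (δ m)))

/-- A (bilinear) map `b` is a Lie bracket: alternating and Jacobi (in Leibniz form). -/
def IsLieBracket {k L : Type*} [Field k] [AddCommGroup L] [Module k L]
    (b : L →ₗ[k] L →ₗ[k] L) : Prop :=
  (∀ a, b a a = 0) ∧ (∀ a c d, b a (b c d) = b (b a c) d + b c (b a d))

/-- The adjoint action of `a` on `L ⊗ L`: `a.(Σ b₁⊗b₂) = Σ [a,b₁]⊗b₂ + b₁⊗[a,b₂]`. -/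
def adT {k L : Type*} [Field k] [AddCommGroup L] [Module k L]
    (b : L →ₗ[k] L →ₗ[k] L) (a : L) : L ⊗[k] L →ₗ[k] L ⊗[k] L :=
  rTensor L (b a) + lTensor L (b a)

/-- `(L, b, δ)` is a Lie bialgebra. -/
def IsLieBialgebra {k L : Type*} [Field k] [AddCommGroup L] [Module k L]
    (b : L →ₗ[k] L →ₗ[k] L) (δ : L →ₗ[k] L ⊗[k] L) : Prop :=
  IsLieBracket b ∧ IsLieCoalgebra δ ∧
    ∀ a c, δ (b a c) = adT b a (δ c) - adT b c (δ a)

variable {k g V : Type*} [Field k] [CharZero k]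
  [AddCommGroup g] [Module k g] [AddCommGroup V] [Module k V]

/-- The unified co-product map on `E = g ⊕ V`:
`δ_E(a + x) = δ_g(a) + Δ_E(x) − τΔ_E(x) + Δ_V(x) + δ_V(x)`. -/
def uniCoprod (δg : g →ₗ[k] g ⊗[k] g) (ΔE : V →ₗ[k] g ⊗[k] V)
    (ΔV : V →ₗ[k] g ⊗[k] g) (δV : V →ₗ[k] V ⊗[k] V) :
    (g × V) →ₗ[k] (g × V) ⊗[k] (g × V) :=
  map (inl k g V) (inl k g V) ∘ₗ δg ∘ₗ fst k g V +
    (map (inl k g V) (inr k g V) ∘ₗ ΔE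
      - map (inr k g V) (inl k g V) ∘ₗ flipT k g V ∘ₗ ΔE
      + map (inl k g V) (inl k g V) ∘ₗ ΔV
      + map (inr k g V) (inr k g V) ∘ₗ δV) ∘ₗ snd k g V

/-- Conditions (CLE1)–(CLE5): `(Δ_E, Δ_V, δ_V)` is a Lie coalgebraic extending
structure of `(g, δ_g)` by `V`. -/
def IsCoalgExtStructure (δg : g →ₗ[k] g ⊗[k] g) (ΔE : V →ₗ[k] g ⊗[k] V)
    (ΔV : V →ₗ[k] g ⊗[k] g) (δV : V →ₗ[k] V ⊗[k] V) : Prop :=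
  -- (CLE1)
  (∀ x, flipT k g g (ΔV x) = - ΔV x) ∧ (∀ x, flipT k V V (δV x) = - δV x) ∧
  -- (CLE2)
  (∀ x, lTensor g ΔV (ΔE x) + lTensor g δg (ΔV x)
      - swap12 k g g g (lTensor g ΔV (ΔE x)) - swap12 k g g g (lTensor g δg (ΔV x)) =
      - asr k g g g (rTensor g ΔV (flipT k g V (ΔE x)))
      + asr k g g g (rTensor g δg (ΔV x))) ∧
  -- (CLE3)
  (∀ x, lTensor g ΔE (ΔE x) - swap12 k g g V (lTensor g ΔE (ΔE x)) =
      asr k g g V (rTensor V δg (ΔE x)) + asr k g g V (rTensor V ΔV (δV x))) ∧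
  -- (CLE4)
  (∀ x, lTensor g δV (ΔE x) - swap12 k V g V (lTensor V ΔE (δV x)) =
      asr k g V V (rTensor V ΔE (δV x))) ∧
  -- (CLE5)
  (∀ x, lTensor V δV (δV x) - swap12 k V V V (lTensor V δV (δV x)) =
      asr k V V V (rTensor V δV (δV x)))

end
noncomputable section
variable {k g V : Type*} [Field k] [CharZero k]
  [AddCommGroup g] [Module k g] [AddCommGroup V] [Module k V]

/-- The unified product bracket on `E = g ⊕ V`:
`[a+x, b+y] = [a,b] + x⊳b − y⊳a + f(x,y) + x⊲b − y⊲a + {x,y}`. -/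
def uniBracket (gbr : g →ₗ[k] g →ₗ[k] g) (lhd : V →ₗ[k] g →ₗ[k] V)
    (rhd : V →ₗ[k] g →ₗ[k] g) (f : V →ₗ[k] V →ₗ[k] g)
    (br : V →ₗ[k] V →ₗ[k] V) : (g × V) →ₗ[k] (g × V) →ₗ[k] (g × V) :=
  LinearMap.mk₂ k
    (fun u v => (gbr u.1 v.1 + rhd u.2 v.1 - rhd v.2 u.1 + f u.2 v.2,
                 lhd u.2 v.1 - lhd v.2 u.1 + br u.2 v.2))
    (by intro m₁ m₂ n; simp [Prod.ext_iff]; constructor <;> abel)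
    (by intro c m n; simp [Prod.ext_iff, smul_add, smul_sub])
    (by intro m n₁ n₂; simp [Prod.ext_iff]; constructor <;> abel)
    (by intro c m n; simp [Prod.ext_iff, smul_add, smul_sub])

/-- Conditions (LE1)–(LE7): `(⊲, ⊳, f, {·,·})` is a Lie extending structure
of the Lie algebra `(g, [·,·])` by `V` (Agore–Militaru). -/
def IsLieExtStructure (gbr : g →ₗ[k] g →ₗ[k] g) (lhd : V →ₗ[k] g →ₗ[k] V)
    (rhd : V →ₗ[k] g →ₗ[k] g) (f : V →ₗ[k] V →ₗ[k] g)
    (br : V →ₗ[k] V →ₗ[k] V) : Prop :=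
  -- (LE1)
  (∀ x, f x x = 0) ∧ (∀ x, br x x = 0) ∧
  -- (LE2) : (V, ⊲) is a right g-module
  (∀ x a b, lhd x (gbr a b) = lhd (lhd x a) b - lhd (lhd x b) a) ∧
  -- (LE3)
  (∀ x a b, rhd x (gbr a b) = gbr (rhd x a) b + gbr a (rhd x b)
      + rhd (lhd x a) b - rhd (lhd x b) a) ∧
  -- (LE4)
  (∀ x y a, lhd (br x y) a = br x (lhd y a) + br (lhd x a) y
      + lhd x (rhd y a) - lhd y (rhd x a)) ∧
  -- (LE5)
  (∀ x y a, rhd (br x y) a = rhd x (rhd y a) - rhd y (rhd x a)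
      + gbr a (f x y) + f x (lhd y a) + f (lhd x a) y) ∧
  -- (LE6)
  (∀ x y z, f x (br y z) + f y (br z x) + f z (br x y)
      + rhd x (f y z) + rhd y (f z x) + rhd z (f x y) = 0) ∧
  -- (LE7)
  (∀ x y z, br x (br y z) + br y (br z x) + br z (br x y)
      + lhd x (f y z) + lhd y (f z x) + lhd z (f x y) = 0)

/-- Conditions (BE2)–(BE7): compatibility between the Lie extending structure
and the Lie coalgebraic extending structure. -/
def BEConditions (gbr : g →ₗ[k] g →ₗ[k] g) (δg : g →ₗ[k] g ⊗[k] g)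
    (lhd : V →ₗ[k] g →ₗ[k] V) (rhd : V →ₗ[k] g →ₗ[k] g)
    (f : V →ₗ[k] V →ₗ[k] g) (br : V →ₗ[k] V →ₗ[k] V)
    (ΔE : V →ₗ[k] g ⊗[k] V) (ΔV : V →ₗ[k] g ⊗[k] g)
    (δV : V →ₗ[k] V ⊗[k] V) : Prop :=
  -- (BE2)
  (∀ a x, - ΔV (lhd x a) - δg (rhd x a) =
      flipT k g g (lTensor g (rhd.flip a) (ΔE x)) - lTensor g (rhd.flip a) (ΔE x)
      + adT gbr a (ΔV x)
      - (rTensor g (rhd x) (δg a) + lTensor g (rhd x) (δg a))) ∧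
  -- (BE3)
  (∀ a x, ΔE (lhd x a) =
      - rTensor V (gbr a) (ΔE x) + lTensor g (lhd.flip a) (ΔE x)
      + rTensor V (rhd.flip a) (δV x) + lTensor g (lhd x) (δg a)) ∧
  -- (BE4)
  (∀ a x, δV (lhd x a) =
      lTensor V (lhd.flip a) (δV x) + rTensor V (lhd.flip a) (δV x)) ∧
  -- (BE5)
  (∀ x y, δg (f x y) + ΔV (br x y) =
      (lTensor g (f x) (ΔE y) - flipT k g g (lTensor g (f x) (ΔE y)))
      + (rTensor g (rhd x) (ΔV y) + lTensor g (rhd x) (ΔV y))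
      - (lTensor g (f y) (ΔE x) - flipT k g g (lTensor g (f y) (ΔE x)))
      - (rTensor g (rhd y) (ΔV x) + lTensor g (rhd y) (ΔV x))) ∧
  -- (BE6)
  (∀ x y, ΔE (br x y) =
      (rTensor V (rhd x) (ΔE y) + lTensor g (br x) (ΔE y))
      + lTensor g (lhd x) (ΔV y) + rTensor V (f x) (δV y)
      - (rTensor V (rhd y) (ΔE x) + lTensor g (br y) (ΔE x))
      - lTensor g (lhd y) (ΔV x) - rTensor V (f y) (δV x)) ∧
  -- (BE7)
  (∀ x y, δV (br x y) =
      (rTensor V (lhd x) (ΔE y) - flipT k V V (rTensor V (lhd x) (ΔE y)))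
      + (rTensor V (br x) (δV y) + lTensor V (br x) (δV y))
      - (rTensor V (lhd y) (ΔE x) - flipT k V V (rTensor V (lhd y) (ΔE x)))
      - (rTensor V (br y) (δV x) + lTensor V (br y) (δV x)))

end

/-! The bracket on `g × V` is alternating, and its Jacobi identity on triples of generators
`(a, 0)`, `(0, x)` splits into the components of the matched-pair axioms; the cobracket is the
direct sum of `δ_g` and `δ_V`, hence always a Lie cobracket. The cocycle condition
`δ[u, v] = u • δv - v • δu` is bilinear and already holds on `g` and on `V`, so it reduces to
mixed pairs `((0, x), (a, 0))`. Splitting `(g × V) ⊗ (g × V)` into its blocks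
`g ⊗ g`, `g ⊗ V`, `V ⊗ g`, `V ⊗ V` turns it into the last three conditions: the `V ⊗ g` block is
the flip of the `g ⊗ V` one, by anti-cocommutativity of `δ_g` and `δ_V`. -/

section Naturality

variable {k A B C A' B' C' : Type*} [Field k]
  [AddCommGroup A] [Module k A] [AddCommGroup B] [Module k B] [AddCommGroup C] [Module k C]
  [AddCommGroup A'] [Module k A'] [AddCommGroup B'] [Module k B']
  [AddCommGroup C'] [Module k C']

theorem flipT_map (f : A →ₗ[k] A') (h : B →ₗ[k] B') (t : A ⊗[k] B) :
    flipT k A' B' (map f h t) = map h f (flipT k A B t) :=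
  (map_comm h f t).symm

theorem flipT_rTensor (f : A →ₗ[k] A') (t : A ⊗[k] B) :
    flipT k A' B (rTensor B f t) = lTensor B f (flipT k A B t) :=
  (lTensor_comm f t).symm

theorem flipT_lTensor (f : B →ₗ[k] B') (t : A ⊗[k] B) :
    flipT k A B' (lTensor A f t) = rTensor A f (flipT k A B t) :=
  (rTensor_comm f t).symm

theorem flipT_eq_zero_iff {t : A ⊗[k] B} : flipT k A B t = 0 ↔ t = 0 :=
  (TensorProduct.comm k A B).map_eq_zero_iff

theorem swap12_map (f : A →ₗ[k] A') (h : B →ₗ[k] B') (l : C →ₗ[k] C') (t : A ⊗[k] (B ⊗[k] C)) :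
    swap12 k A' B' C' (map f (map h l) t) = map h (map f l) (swap12 k A B C t) :=
  LinearMap.congr_fun (ext_threefold' fun _ _ _ => rfl :
    swap12 k A' B' C' ∘ₗ map f (map h l) = map h (map f l) ∘ₗ swap12 k A B C) t

theorem asr_map (f : A →ₗ[k] A') (h : B →ₗ[k] B') (l : C →ₗ[k] C') (t : (A ⊗[k] B) ⊗[k] C) :
    asr k A' B' C' (map (map f h) l t) = map f (map h l) (asr k A B C t) :=
  (map_map_assoc f h l t).symm

theorem map_inl_inr_sum_eq_iff {p p' : A ⊗[k] A} {q q' : A ⊗[k] B} {r r' : B ⊗[k] A}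
    {s s' : B ⊗[k] B} :
    map (inl k A B) (inl k A B) p + map (inl k A B) (inr k A B) q
        + map (inr k A B) (inl k A B) r + map (inr k A B) (inr k A B) s =
      map (inl k A B) (inl k A B) p' + map (inl k A B) (inr k A B) q'
        + map (inr k A B) (inl k A B) r' + map (inr k A B) (inr k A B) s' ↔
      p = p' ∧ q = q' ∧ r = r' ∧ s = s' := by
  refine ⟨fun h => ⟨?_, ?_, ?_, ?_⟩, by rintro ⟨rfl, rfl, rfl, rfl⟩; rfl⟩
  · simpa [map_map] using congrArg (map (fst k A B) (fst k A B)) h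
  · simpa [map_map] using congrArg (map (fst k A B) (snd k A B)) h
  · simpa [map_map] using congrArg (map (snd k A B) (fst k A B)) h
  · simpa [map_map] using congrArg (map (snd k A B) (snd k A B)) h

end Naturality

section Coalgebra

variable {k M N : Type*} [Field k] [AddCommGroup M] [Module k M] [AddCommGroup N] [Module k N]
  {δM : M →ₗ[k] M ⊗[k] M} {δN : N →ₗ[k] N ⊗[k] N} {φ : M →ₗ[k] N}

theorem lTensor_map_of_comp_eq (hφ : δN ∘ₗ φ = map φ φ ∘ₗ δM) (t : M ⊗[k] M) :
    lTensor N δN (map φ φ t) = map φ (map φ φ) (lTensor M δM t) := by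
  rw [lTensor_map, hφ, map_lTensor]

theorem rTensor_map_of_comp_eq (hφ : δN ∘ₗ φ = map φ φ ∘ₗ δM) (t : M ⊗[k] M) :
    rTensor N δN (map φ φ t) = map (map φ φ) φ (rTensor M δM t) := by
  rw [rTensor_map, hφ, map_rTensor]

theorem IsLieCoalgebra.apply_of_comp_eq (hM : IsLieCoalgebra δM)
    (hφ : δN ∘ₗ φ = map φ φ ∘ₗ δM) (m : M) :
    flipT k N N (δN (φ m)) = - δN (φ m) ∧
      lTensor N δN (δN (φ m)) - swap12 k N N N (lTensor N δN (δN (φ m))) =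
        asr k N N N (rTensor N δN (δN (φ m))) := by
  have hφm : δN (φ m) = map φ φ (δM m) := LinearMap.congr_fun hφ m
  rw [hφm, flipT_map, hM.1, map_neg, lTensor_map_of_comp_eq hφ, rTensor_map_of_comp_eq hφ,
    swap12_map, asr_map, ← map_sub, hM.2 m]
  exact ⟨rfl, rfl⟩

end Coalgebra

theorem IsLieBracket.skew {k L : Type*} [Field k] [AddCommGroup L] [Module k L]
    {b : L →ₗ[k] L →ₗ[k] L} (hb : IsLieBracket b) (u v : L) : b u v = - b v u := by
  have h := hb.1 (u + v)
  simp only [map_add, LinearMap.add_apply, hb.1, zero_add, add_zero] at h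
  exact eq_neg_of_add_eq_zero_right h

theorem adT_add {k L : Type*} [Field k] [AddCommGroup L] [Module k L] (b : L →ₗ[k] L →ₗ[k] L)
    (u v : L) : adT b (u + v) = adT b u + adT b v := by
  simp only [adT, map_add, rTensor_add, lTensor_add]
  abel

theorem Prod.mk_eq_mk_zero_add_zero_mk {M N : Type*} [AddZeroClass M] [AddZeroClass N]
    (a : M) (x : N) : (a, x) = (a, 0) + (0, x) := by
  simp

section DoubleCrossSum

variable {k g V : Type*} [Field k] [AddCommGroup g] [Module k g] [AddCommGroup V] [Module k V]

section Bracket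

variable {gbr : g →ₗ[k] g →ₗ[k] g} {lhd : V →ₗ[k] g →ₗ[k] V} {rhd : V →ₗ[k] g →ₗ[k] g}
  {vbr : V →ₗ[k] V →ₗ[k] V}

theorem uniBracket_apply (a b : g) (x y : V) :
    uniBracket gbr lhd rhd 0 vbr (a, x) (b, y) =
      (gbr a b + rhd x b - rhd y a, lhd x b - lhd y a + vbr x y) := by
  simp [uniBracket]

theorem isLieBracket_uniBracket_iff (hg : IsLieBracket gbr) (hV : IsLieBracket vbr) :
    IsLieBracket (uniBracket gbr lhd rhd 0 vbr) ↔
      (∀ x a b, lhd x (gbr a b) = lhd (lhd x a) b - lhd (lhd x b) a) ∧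
      (∀ x y a, rhd (vbr x y) a = rhd x (rhd y a) - rhd y (rhd x a)) ∧
      (∀ x a b, rhd x (gbr a b) = gbr (rhd x a) b + gbr a (rhd x b)
          + rhd (lhd x a) b - rhd (lhd x b) a) ∧
      (∀ x y a, lhd (vbr x y) a = vbr x (lhd y a) + vbr (lhd x a) y
          + lhd x (rhd y a) - lhd y (rhd x a)) := by
  constructor
  · rintro ⟨-, hJ⟩
    have hJacVgg := fun x a b => hJ (0, x) (a, 0) (b, 0)
    have hJacVVg := fun x y a => hJ (0, x) (0, y) (a, 0)
    simp only [uniBracket_apply, map_zero, LinearMap.zero_apply, add_zero, zero_add, sub_zero,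
      zero_sub, Prod.mk_add_mk, Prod.mk.injEq] at hJacVgg hJacVVg
    refine ⟨fun x a b => ?_, fun x y a => ?_, fun x a b => ?_, fun x y a => ?_⟩
    · linear_combination (norm := module) (hJacVgg x a b).2
    · linear_combination (norm := module) -(hJacVVg x y a).1
    · linear_combination (norm := module) (hJacVgg x a b).1
    · linear_combination (norm := module) -(hJacVVg x y a).2 - hV.skew (lhd x a) y
  · rintro ⟨hlhd, hrhd, hLE3, hLE4⟩
    refine ⟨fun ⟨a, x⟩ => by simp [uniBracket_apply, hg.1, hV.1], ?_⟩
    rintro ⟨a, x⟩ ⟨b, y⟩ ⟨c, z⟩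
    simp only [uniBracket_apply, map_add, map_sub, LinearMap.add_apply, LinearMap.sub_apply,
      Prod.mk_add_mk, Prod.mk.injEq]
    constructor
    · simp only [hg.2 a b c, hLE3 x b c, hrhd y z a, hLE3 z a b, hrhd x y c, hLE3 y a c,
        hrhd x z b, hg.skew (rhd z a) b]
      abel
    · simp only [hV.2 x y z, hlhd x b c, hLE4 y z a, hlhd z a b, hLE4 x y c, hlhd y a c,
        hLE4 x z b, hV.skew (lhd x c) y]
      abel

theorem adT_uniBracket_map_inl_inl (a : g) (t : g ⊗[k] g) :
    adT (uniBracket gbr lhd rhd 0 vbr) (a, 0) (map (inl k g V) (inl k g V) t) =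
      map (inl k g V) (inl k g V) (adT gbr a t) := by
  induction t using TensorProduct.induction_on with
  | zero => simp
  | tmul c d => simp [adT, uniBracket_apply]
  | add s t hs ht => simp only [map_add] at *; rw [hs, ht]

theorem adT_uniBracket_map_inr_inr (x : V) (s : V ⊗[k] V) :
    adT (uniBracket gbr lhd rhd 0 vbr) (0, x) (map (inr k g V) (inr k g V) s) =
      map (inr k g V) (inr k g V) (adT vbr x s) := by
  induction s using TensorProduct.induction_on with
  | zero => simp
  | tmul c d => simp [adT, uniBracket_apply]
  | add s t hs ht => simp only [map_add] at *; rw [hs, ht]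

theorem adT_uniBracket_map_inl_inl_of_inr (x : V) (t : g ⊗[k] g) :
    adT (uniBracket gbr lhd rhd 0 vbr) (0, x) (map (inl k g V) (inl k g V) t) =
      map (inl k g V) (inl k g V) (rTensor g (rhd x) t + lTensor g (rhd x) t)
      + map (inl k g V) (inr k g V) (lTensor g (lhd x) t)
      + map (inr k g V) (inl k g V) (rTensor g (lhd x) t) := by
  induction t using TensorProduct.induction_on with
  | zero => simp
  | tmul c d =>
    simp only [adT, map_tmul, coe_inl, LinearMap.add_apply, rTensor_tmul, uniBracket_apply,
      map_zero, LinearMap.zero_apply, zero_add, sub_zero, add_zero, lTensor_tmul, map_add, coe_inr]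
    rw [Prod.mk_eq_mk_zero_add_zero_mk (rhd x c), Prod.mk_eq_mk_zero_add_zero_mk (rhd x d),
      add_tmul, tmul_add]
    abel
  | add s t hs ht => simp only [map_add] at *; rw [hs, ht]; abel

theorem adT_uniBracket_map_inr_inr_of_inl (a : g) (s : V ⊗[k] V) :
    adT (uniBracket gbr lhd rhd 0 vbr) (a, 0) (map (inr k g V) (inr k g V) s) =
      - map (inl k g V) (inr k g V) (rTensor V (rhd.flip a) s)
      - map (inr k g V) (inl k g V) (lTensor V (rhd.flip a) s)
      - map (inr k g V) (inr k g V) (lTensor V (lhd.flip a) s + rTensor V (lhd.flip a) s) := by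
  induction s using TensorProduct.induction_on with
  | zero => simp
  | tmul c d =>
    simp only [adT, map_tmul, coe_inr, LinearMap.add_apply, rTensor_tmul, uniBracket_apply,
      map_zero, LinearMap.zero_apply, add_zero, zero_sub, lTensor_tmul, flip_apply, coe_inl,
      map_add]
    rw [← Prod.neg_mk, ← Prod.neg_mk, Prod.mk_eq_mk_zero_add_zero_mk (rhd c a),
      Prod.mk_eq_mk_zero_add_zero_mk (rhd d a)]
    simp only [neg_tmul, tmul_neg, add_tmul, tmul_add]
    abel
  | add s t hs ht => simp only [map_add] at *; rw [hs, ht]; abel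

end Bracket

section Coproduct

variable (δg : g →ₗ[k] g ⊗[k] g) (δV : V →ₗ[k] V ⊗[k] V)

theorem uniCoprod_apply (a : g) (x : V) :
    uniCoprod δg 0 0 δV (a, x) =
      map (inl k g V) (inl k g V) (δg a) + map (inr k g V) (inr k g V) (δV x) := by
  simp [uniCoprod]

theorem uniCoprod_comp_inl : uniCoprod δg 0 0 δV ∘ₗ inl k g V = map (inl k g V) (inl k g V) ∘ₗ δg :=
  LinearMap.ext fun a => by simp [uniCoprod_apply]

theorem uniCoprod_comp_inr : uniCoprod δg 0 0 δV ∘ₗ inr k g V = map (inr k g V) (inr k g V) ∘ₗ δV :=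
  LinearMap.ext fun x => by simp [uniCoprod_apply]

variable {δg δV}

theorem isLieCoalgebra_uniCoprod (hg : IsLieCoalgebra δg) (hV : IsLieCoalgebra δV) :
    IsLieCoalgebra (uniCoprod δg 0 0 δV) := by
  have hl := hg.apply_of_comp_eq (uniCoprod_comp_inl δg δV)
  have hr := hV.apply_of_comp_eq (uniCoprod_comp_inr δg δV)
  simp only [inl_apply, inr_apply] at hl hr
  constructor <;> rintro ⟨a, x⟩ <;> rw [Prod.mk_eq_mk_zero_add_zero_mk]
  · simp only [map_add, (hl a).1, (hr x).1, neg_add]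
  · simp only [map_add, ← (hl a).2, ← (hr x).2]
    abel

end Coproduct

section Cocycle

variable {gbr : g →ₗ[k] g →ₗ[k] g} {lhd : V →ₗ[k] g →ₗ[k] V} {rhd : V →ₗ[k] g →ₗ[k] g}
  {vbr : V →ₗ[k] V →ₗ[k] V} {δg : g →ₗ[k] g ⊗[k] g} {δV : V →ₗ[k] V ⊗[k] V}

theorem uniCoprod_uniBracket_inr_inl_iff (hδg : ∀ a, flipT k g g (δg a) = -δg a)
    (hδV : ∀ x, flipT k V V (δV x) = -δV x) (x : V) (a : g) :
    uniCoprod δg 0 0 δV (uniBracket gbr lhd rhd 0 vbr (0, x) (a, 0)) =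
        adT (uniBracket gbr lhd rhd 0 vbr) (0, x) (uniCoprod δg 0 0 δV (a, 0))
          - adT (uniBracket gbr lhd rhd 0 vbr) (a, 0) (uniCoprod δg 0 0 δV (0, x)) ↔
      δV (lhd x a) = lTensor V (lhd.flip a) (δV x) + rTensor V (lhd.flip a) (δV x) ∧
      δg (rhd x a) = rTensor g (rhd x) (δg a) + lTensor g (rhd x) (δg a) ∧
      rTensor V (rhd.flip a) (δV x) + lTensor g (lhd x) (δg a) = 0 := by
  have hlhs : uniCoprod δg 0 0 δV (uniBracket gbr lhd rhd 0 vbr (0, x) (a, 0)) =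
      map (inl k g V) (inl k g V) (δg (rhd x a)) + map (inl k g V) (inr k g V) 0
        + map (inr k g V) (inl k g V) 0 + map (inr k g V) (inr k g V) (δV (lhd x a)) := by
    simp [uniBracket_apply, uniCoprod_apply]
  have hrhs : adT (uniBracket gbr lhd rhd 0 vbr) (0, x) (uniCoprod δg 0 0 δV (a, 0))
        - adT (uniBracket gbr lhd rhd 0 vbr) (a, 0) (uniCoprod δg 0 0 δV (0, x)) =
      map (inl k g V) (inl k g V) (rTensor g (rhd x) (δg a) + lTensor g (rhd x) (δg a))
        + map (inl k g V) (inr k g V) (rTensor V (rhd.flip a) (δV x) + lTensor g (lhd x) (δg a))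
        + map (inr k g V) (inl k g V) (rTensor g (lhd x) (δg a) + lTensor V (rhd.flip a) (δV x))
        + map (inr k g V) (inr k g V)
            (lTensor V (lhd.flip a) (δV x) + rTensor V (lhd.flip a) (δV x)) := by
    simp only [uniCoprod_apply, map_zero, add_zero, zero_add, adT_uniBracket_map_inl_inl_of_inr,
      adT_uniBracket_map_inr_inr_of_inl, map_add]
    abel
  have hflip : rTensor g (lhd x) (δg a) + lTensor V (rhd.flip a) (δV x) =
      -flipT k g V (rTensor V (rhd.flip a) (δV x) + lTensor g (lhd x) (δg a)) := by
    rw [map_add, flipT_rTensor, flipT_lTensor, hδg, hδV, map_neg, map_neg]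
    abel
  rw [hlhs, hrhs, map_inl_inr_sum_eq_iff, hflip, eq_comm (a := (0 : V ⊗[k] g)), neg_eq_zero,
    flipT_eq_zero_iff]
  tauto

theorem uniBracket_cocycle_iff
    (hgc : ∀ a b, δg (gbr a b) = adT gbr a (δg b) - adT gbr b (δg a))
    (hVc : ∀ x y, δV (vbr x y) = adT vbr x (δV y) - adT vbr y (δV x))
    (hδg : ∀ a, flipT k g g (δg a) = -δg a) (hδV : ∀ x, flipT k V V (δV x) = -δV x) :
    (∀ u v, uniCoprod δg 0 0 δV (uniBracket gbr lhd rhd 0 vbr u v) =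
        adT (uniBracket gbr lhd rhd 0 vbr) u (uniCoprod δg 0 0 δV v)
          - adT (uniBracket gbr lhd rhd 0 vbr) v (uniCoprod δg 0 0 δV u)) ↔
      ∀ a x, δV (lhd x a) = lTensor V (lhd.flip a) (δV x) + rTensor V (lhd.flip a) (δV x) ∧
        δg (rhd x a) = rTensor g (rhd x) (δg a) + lTensor g (rhd x) (δg a) ∧
        rTensor V (rhd.flip a) (δV x) + lTensor g (lhd x) (δg a) = 0 := by
  set B := uniBracket gbr lhd rhd 0 vbr
  set δ := uniCoprod δg 0 0 δV
  have hmixed :=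
    uniCoprod_uniBracket_inr_inl_iff (gbr := gbr) (lhd := lhd) (rhd := rhd) (vbr := vbr) hδg hδV
  refine ⟨fun h a x => (hmixed x a).1 (h (0, x) (a, 0)), fun h => ?_⟩
  have hrl : ∀ x a, δ (B (0, x) (a, 0)) = adT B (0, x) (δ (a, 0)) - adT B (a, 0) (δ (0, x)) :=
    fun x a => (hmixed x a).2 (h a x)
  have hlr : ∀ a x, δ (B (a, 0) (0, x)) = adT B (a, 0) (δ (0, x)) - adT B (0, x) (δ (a, 0)) := by
    intro a x
    have hskew : B (a, 0) (0, x) = -B (0, x) (a, 0) := by simp [B, uniBracket_apply]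
    rw [hskew, map_neg, hrl, neg_sub]
  have hll : ∀ a b, δ (B (a, 0) (b, 0)) = adT B (a, 0) (δ (b, 0)) - adT B (b, 0) (δ (a, 0)) := by
    intro a b
    simp [B, δ, uniBracket_apply, uniCoprod_apply, adT_uniBracket_map_inl_inl, hgc]
  have hrr : ∀ x y, δ (B (0, x) (0, y)) = adT B (0, x) (δ (0, y)) - adT B (0, y) (δ (0, x)) := by
    intro x y
    simp [B, δ, uniBracket_apply, uniCoprod_apply, adT_uniBracket_map_inr_inr, hVc]
  rintro ⟨a, x⟩ ⟨b, y⟩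
  rw [Prod.mk_eq_mk_zero_add_zero_mk a x, Prod.mk_eq_mk_zero_add_zero_mk b y]
  simp only [map_add, LinearMap.add_apply, adT_add, hll, hlr, hrl, hrr]
  abel

end Cocycle

end DoubleCrossSum

noncomputable section
variable {k g V : Type*} [Field k] [CharZero k]
  [AddCommGroup g] [Module k g] [AddCommGroup V] [Module k V]

/-- **Theorem (double cross sum).** Given Lie bialgebras `(g,[·,·],δ_g)` and
`(V,{·,·},δ_V)` and actions `⊳ : V×g → g`, `⊲ : V×g → V` (with `f`, `Δ_E`, `Δ_V`
trivial), the bracket `[a+x, b+y] = [a,b] + x⊳b − y⊳a + x⊲b − y⊲a + {x,y}` and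
co-bracket `δ(a+x) = δ_g(a) + δ_V(x)` make `g ⊕ V` a Lie bialgebra iff the listed
matched-pair and compatibility conditions hold. -/
theorem double_cross_sum_iff (gbr : g →ₗ[k] g →ₗ[k] g) (δg : g →ₗ[k] g ⊗[k] g)
    (hg : IsLieBialgebra gbr δg)
    (vbr : V →ₗ[k] V →ₗ[k] V) (δV : V →ₗ[k] V ⊗[k] V)
    (hV : IsLieBialgebra vbr δV)
    (lhd : V →ₗ[k] g →ₗ[k] V) (rhd : V →ₗ[k] g →ₗ[k] g) :
    IsLieBialgebra (uniBracket gbr lhd rhd 0 vbr) (uniCoprod δg 0 0 δV) ↔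
      -- (V, ⊲) is a right g-module
      (∀ x a b, lhd x (gbr a b) = lhd (lhd x a) b - lhd (lhd x b) a) ∧
      -- (g, ⊳) is a left V-module, i.e. {x,y}⊳a = x⊳(y⊳a) − y⊳(x⊳a)
      (∀ x y a, rhd (vbr x y) a = rhd x (rhd y a) - rhd y (rhd x a)) ∧
      -- (LE3)
      (∀ x a b, rhd x (gbr a b) = gbr (rhd x a) b + gbr a (rhd x b)
          + rhd (lhd x a) b - rhd (lhd x b) a) ∧
      -- (LE4)
      (∀ x y a, lhd (vbr x y) a = vbr x (lhd y a) + vbr (lhd x a) y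
          + lhd x (rhd y a) - lhd y (rhd x a)) ∧
      -- (BE4) : δ_V(x⊲a) = (I⊗R_⊲(a) + R_⊲(a)⊗I)δ_V(x)
      (∀ a x, δV (lhd x a) =
          lTensor V (lhd.flip a) (δV x) + rTensor V (lhd.flip a) (δV x)) ∧
      -- δ_g(x⊳a) = (L_⊳(x)⊗I + I⊗L_⊳(x))δ_g(a)
      (∀ a x, δg (rhd x a) =
          rTensor g (rhd x) (δg a) + lTensor g (rhd x) (δg a)) ∧
      -- (R_⊳(a)⊗I)δ_V(x) + (I⊗L_⊲(x))δ_g(a) = 0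
      (∀ a x, rTensor V (rhd.flip a) (δV x) + lTensor g (lhd x) (δg a) = 0) := by
  obtain ⟨hgb, hgc, hgcomp⟩ := hg
  obtain ⟨hVb, hVc, hVcomp⟩ := hV
  rw [IsLieBialgebra, isLieBracket_uniBracket_iff hgb hVb,
    uniBracket_cocycle_iff hgcomp hVcomp hgc.1 hVc.1]
  simp only [isLieCoalgebra_uniCoprod hgc hVc, true_and, forall_and, and_assoc]

end
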